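/- Under the standing assumptions, setting u := f(U_{C*}) and C** := C* ∪ {u}, the chain C** satisfies condition (ii): for every C' ∈ 𝒞₀, one has C** \ C' ⊆ U_{C'}; consequently C** ∈ 𝒞. -/

import Mathlib

/-!
`C*` is a chain in `𝒞₀` (any two members of `𝒞` are comparable through condition (ii)),
and `u := f (U C*)` lies strictly above it. To see that `u ∉ C'` forces `u ∈ U C'` for
`C' ∈ 𝒞₀`, look at `v := f (U (C* ∩ C'))`: condition (i) for `C'` puts `v` into `C'` unless
`U (C* ∩ C') ⊆ U C'`, which is impossible, since `v` is either `u` itself or (by (i) for `C*`)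
an element of `C*`, hence of `C* ∩ C'` lying strictly above that set. So `v ∈ U C'`, and
`v ≤ u` gives `u ∈ U C'`.
-/

/-- The set of strict upper bounds of a chain `C`. -/
def U {P : Type*} [PartialOrder P] (C : Set P) : Set P := {x | ∀ y ∈ C, y < x}

/-- `𝒞₀` : the set of all chains `C` of `P` satisfying condition (i-C):
for every `S ⊆ C` with `U S ⊈ U C`, one has `f (U S) ∈ C`. -/
def Cfam0 {P : Type*} [PartialOrder P] (f : Set P → P) : Set (Set P) :=
  {C | IsChain (· ≤ ·) C ∧ ∀ S ⊆ C, ¬ U S ⊆ U C → f (U S) ∈ C}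

/-- `𝒞` : the set of all `C ∈ 𝒞₀` satisfying condition (ii-C):
for every `C' ∈ 𝒞₀`, one has `C \ C' ⊆ U C'`. -/
def Cfam {P : Type*} [PartialOrder P] (f : Set P → P) : Set (Set P) :=
  {C | C ∈ Cfam0 f ∧ ∀ C' ∈ Cfam0 f, C \ C' ⊆ U C'}

section

variable {P : Type*} [PartialOrder P] {f : Set P → P} {S C C' : Set P} {u : P}

open Set

theorem U_anti (h : S ⊆ C) : U C ⊆ U S :=
  fun _ hx y hy => hx y (h hy)

theorem U_eq_of_subset (h : S ⊆ C) (hU : U S ⊆ U C) : U S = U C :=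
  hU.antisymm (U_anti h)

theorem U_union_singleton (hu : u ∈ U C) : U (C ∪ {u}) = Ioi u := by
  ext x
  refine ⟨fun hx => hx u (Or.inr rfl), fun hux y hy => ?_⟩
  rcases hy with hy | rfl
  · exact (hu y hy).trans hux
  · exact hux

theorem isChain_sUnion_Cfam : IsChain (· ≤ ·) (⋃₀ Cfam f) := by
  rintro x ⟨C, hC, hxC⟩ y ⟨C', hC', hyC'⟩ hxy
  by_cases hx : x ∈ C'
  · exact hC'.1.1 hx hyC' hxy
  · exact Or.inr (hC.2 C' hC'.1 ⟨hxC, hx⟩ y hyC').le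

theorem sUnion_Cfam_diff_subset (hC' : C' ∈ Cfam0 f) : ⋃₀ Cfam f \ C' ⊆ U C' := by
  rintro x ⟨⟨C, hC, hxC⟩, hx⟩
  exact hC.2 C' hC' ⟨hxC, hx⟩

theorem sUnion_Cfam_mem_Cfam0 : ⋃₀ Cfam f ∈ Cfam0 f := by
  refine ⟨isChain_sUnion_Cfam, fun S hS hUS => ?_⟩
  obtain ⟨x, hxS, hx⟩ := not_subset.mp hUS
  obtain ⟨z, ⟨C, hC, hzC⟩, hzx⟩ : ∃ z ∈ ⋃₀ Cfam f, ¬ z < x := by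
    simpa only [U, mem_ofPred_eq, not_forall, exists_prop] using hx
  -- an element of `S` outside `C` would lie above `z`, hence `z < x`
  have hSC : S ⊆ C := by
    intro s hs
    by_contra hsC
    obtain ⟨C'', hC'', hsC''⟩ := hS hs
    exact hzx ((hC''.2 C hC.1 ⟨hsC'', hsC⟩ z hzC).trans (hxS s hs))
  exact ⟨C, hC, hC.1.2 S hSC fun h => hzx (h hxS z hzC)⟩

theorem sUnion_Cfam_mem_Cfam : ⋃₀ Cfam f ∈ Cfam f :=
  ⟨sUnion_Cfam_mem_Cfam0, fun _ => sUnion_Cfam_diff_subset⟩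

variable (hf : ∀ C : Set P, IsChain (· ≤ ·) C → f (U C) ∈ U C)
include hf

theorem mem_U_of_not_mem_Cfam0 (hC : C ∈ Cfam0 f) (hC' : C' ∈ Cfam0 f)
    (hu : f (U C) ∉ C') : f (U C) ∈ U C' := by
  set S := C ∩ C'
  set v := f (U S)
  have hvS : v ∈ U S := hf S (hC.1.mono inter_subset_left)
  by_cases hSC : U S ⊆ U C
  · have hv : v = f (U C) := congrArg f (U_eq_of_subset inter_subset_left hSC)
    have hSC' : U S ⊆ U C' := by
      by_contra h
      exact hu (hv ▸ hC'.2 S inter_subset_right h)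
    exact hv ▸ hSC' hvS
  · have hvC : v ∈ C := hC.2 S inter_subset_left hSC
    have hSC' : U S ⊆ U C' := by
      by_contra h
      exact lt_irrefl v (hvS v ⟨hvC, hC'.2 S inter_subset_right h⟩)
    exact fun y hy => (hSC' hvS y hy).trans (hf C hC.1 v hvC)

theorem union_singleton_mem_Cfam0 (hC : C ∈ Cfam0 f) : C ∪ {f (U C)} ∈ Cfam0 f := by
  have hu : f (U C) ∈ U C := hf C hC.1
  refine ⟨?_, fun S hS hUS => ?_⟩
  · rw [union_singleton]
    exact hC.1.insert fun b hb _ => Or.inr (hu b hb).le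
  have huS : f (U C) ∉ S := fun huS =>
    hUS (U_union_singleton hu ▸ fun x hx => hx _ huS)
  have hSC : S ⊆ C := (subset_insert_iff_of_notMem huS).mp (union_singleton ▸ hS)
  by_cases hSC' : U S ⊆ U C
  · exact Or.inr (congrArg f (U_eq_of_subset hSC hSC'))
  · exact Or.inl (hC.2 S hSC hSC')

theorem union_singleton_diff_subset (hC : C ∈ Cfam f) (hC' : C' ∈ Cfam0 f) :
    (C ∪ {f (U C)}) \ C' ⊆ U C' := by
  rintro x ⟨hx | rfl, hxC'⟩
  · exact hC.2 C' hC' ⟨hx, hxC'⟩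
  · exact mem_U_of_not_mem_Cfam0 hf hC.1 hC' hxC'

end

theorem stmt_11_general {P : Type*} [PartialOrder P]
    (f : Set P → P) (hf : ∀ C : Set P, IsChain (· ≤ ·) C → f (U C) ∈ U C) :
    (∀ C' ∈ Cfam0 f, (⋃₀ Cfam f ∪ {f (U (⋃₀ Cfam f))}) \ C' ⊆ U C') ∧
      ⋃₀ Cfam f ∪ {f (U (⋃₀ Cfam f))} ∈ Cfam f := by
  have hii : ∀ C' ∈ Cfam0 f, (⋃₀ Cfam f ∪ {f (U (⋃₀ Cfam f))}) \ C' ⊆ U C' :=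
    fun _ => union_singleton_diff_subset hf sUnion_Cfam_mem_Cfam
  exact ⟨hii, union_singleton_mem_Cfam0 hf sUnion_Cfam_mem_Cfam0, hii⟩

/-- With `u := f (U C*)` and `C** := C* ∪ {u}`, the chain `C**` satisfies
condition (ii): for every `C' ∈ 𝒞₀`, one has `C** \ C' ⊆ U C'`;
consequently `C** ∈ 𝒞`. -/
theorem stmt_11 {P : Type*} [PartialOrder P] [Nonempty P]
    (hub : ∀ C : Set P, IsChain (· ≤ ·) C → ∃ x : P, ∀ y ∈ C, y ≤ x)
    (hnomax : ∀ m : P, ∃ x : P, m < x)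
    (f : Set P → P) (hf : ∀ C : Set P, IsChain (· ≤ ·) C → f (U C) ∈ U C) :
    (∀ C' ∈ Cfam0 f, (⋃₀ Cfam f ∪ {f (U (⋃₀ Cfam f))}) \ C' ⊆ U C') ∧
      ⋃₀ Cfam f ∪ {f (U (⋃₀ Cfam f))} ∈ Cfam f :=
  stmt_11_general f hf
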